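/- For each ray r in the output S of the MOD-SSR algorithm, there exists a segment ν_r (the critical segment for r) such that N(ν_r) ⊆ T_r at termination, where N(ν_r) is the set of all input rays intersecting ν_r. -/

import Mathlib

attribute [local instance] Classical.propDecidable

/-- A leftward-directed horizontal ray, given by its right endpoint `(x, y)`:
the point set `{(x', y) : x' ≤ x}`. -/
structure Ray where
  x : ℝ
  y : ℝ

/-- A vertical segment with `x`-coordinate `x` and `y`-range `[lo, hi]`. -/
structure VSeg where
  x : ℝ
  lo : ℝ
  hi : ℝ

/-- A leftward-directed ray intersects a vertical segment iff the segment's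
`x`-coordinate is at most the ray's right endpoint and the ray's height lies
in the segment's `y`-range. -/
def hits (r : Ray) (v : VSeg) : Prop :=
  v.x ≤ r.x ∧ v.lo ≤ r.y ∧ r.y ≤ v.hi

/-- A ray `r` of the surviving set `Rset` is critical if some surviving segment
intersects `r` and no other surviving ray. -/
def critical (Rset : Finset Ray) (Vset : Finset VSeg) (r : Ray) : Prop :=
  r ∈ Rset ∧ ∃ v ∈ Vset, hits r v ∧ ∀ r' ∈ Rset, hits r' v → r' = r

/-- `r'` lies just above `r` within the set `D` of rays. -/
def justAbove (D : Finset Ray) (r r' : Ray) : Prop :=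
  r ∈ D ∧ r' ∈ D ∧ r.y < r'.y ∧ ∀ r'' ∈ D, ¬ (r.y < r''.y ∧ r''.y < r'.y)

/-- An execution trace of the MOD-SSR token-passing algorithm on the SSR instance
`(R, V)`.  `Rs i, Vs i, Ss i, Tok i` are the surviving rays, surviving segments,
heuristic solution and tokens at the end of iteration `i`; `pivot i` is the ray
with smallest right-endpoint `x`-coordinate that passes its token in iteration `i`. -/
structure ModSSRTrace (R : Finset Ray) (V : Finset VSeg) where
  steps : ℕ
  Rs : ℕ → Finset Ray
  Vs : ℕ → Finset VSeg
  Ss : ℕ → Finset Ray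
  Tok : ℕ → Ray → Finset Ray
  pivot : ℕ → Ray
  init_R : Rs 0 = R
  init_V : Vs 0 = V
  init_S : Ss 0 = ∅
  init_T : ∀ r, Tok 0 r = {r}
  running : ∀ i < steps, Vs i ≠ ∅
  /-- step (a): collect all rays critical after the previous iteration. -/
  S_step : ∀ i, 1 ≤ i → i ≤ steps →
    Ss i = Ss (i-1) ∪ (Rs (i-1)).filter (fun r => critical (Rs (i-1)) (Vs (i-1)) r)
  /-- step (b): delete all segments intersecting some solution ray. -/
  V_step : ∀ i, 1 ≤ i → i ≤ steps →
    Vs i = (Vs (i-1)).filter (fun v => ∀ r ∈ Ss i, ¬ hits r v)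
  /-- step (c): the pivot is a surviving non-solution ray of smallest right-endpoint
  `x`-coordinate. -/
  pivot_mem : ∀ i, 1 ≤ i → i ≤ steps → pivot i ∈ Rs (i-1) \ Ss i
  pivot_min : ∀ i, 1 ≤ i → i ≤ steps → ∀ r ∈ Rs (i-1) \ Ss i, (pivot i).x ≤ r.x
  /-- token passing: each label `x` in the pivot's token migrates to a neighbour
  (just above / just below in `Rs (i-1) \ Ss i`) whenever some surviving segment
  intersects `x`, the pivot and that neighbour; then the pivot's token is emptied. -/
  Tok_step : ∀ i, 1 ≤ i → i ≤ steps → ∀ r' : Ray,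
    Tok i r' =
      if r' = pivot i then ∅
      else if justAbove (Rs (i-1) \ Ss i) (pivot i) r'
              ∨ justAbove (Rs (i-1) \ Ss i) r' (pivot i) then
        Tok (i-1) r' ∪ (Tok (i-1) (pivot i)).filter
          (fun x => ∃ v ∈ Vs i, hits x v ∧ hits (pivot i) v ∧ hits r' v)
      else Tok (i-1) r'
  /-- deletion of the pivot and the solution rays. -/
  R_step : ∀ i, 1 ≤ i → i ≤ steps →
    Rs i = (Rs (i-1) \ Ss i).erase (pivot i)
  /-- termination: no segment is left. -/
  term : Vs steps = ∅

/-! The label of a ray `x` is passed, pivot after pivot, along rays that still hit a fixed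
surviving segment `v` hit by `x`: when the pivot holding it is removed, `v` is not yet covered,
so another surviving ray hits `v`, and since the pivot has the leftmost right endpoint, its
neighbour (in height) towards that ray hits `v` as well and receives the label. When `r` enters
the solution through its critical segment `ν`, the only surviving ray hitting `ν` is `r`, so
every label of a ray hitting `ν` sits in `T_r`; solution rays are never pivots, so `T_r` only
grows afterwards. -/

lemma hits_of_between {a b m : Ray} {v : VSeg} (ha : hits a v) (hb : hits b v)
    (hx : v.x ≤ m.x) (ham : a.y ≤ m.y) (hmb : m.y ≤ b.y) : hits m v :=
  ⟨hx, ha.2.1.trans ham, hmb.trans hb.2.2⟩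

def adjacent (D : Finset Ray) (p m : Ray) : Prop :=
  justAbove D p m ∨ justAbove D m p

lemma adjacent.ne {D : Finset Ray} {p m : Ray} (h : adjacent D p m) : m ≠ p := by
  rintro rfl
  exact h.elim (fun h => h.2.2.1.false) (fun h => h.2.2.1.false)

lemma adjacent.mem {D : Finset Ray} {p m : Ray} (h : adjacent D p m) : m ∈ D :=
  h.elim (·.2.1) (·.1)

lemma exists_justAbove_le {D : Finset Ray} {p q : Ray} (hp : p ∈ D) (hq : q ∈ D)
    (hpq : p.y < q.y) : ∃ m, justAbove D p m ∧ m.y ≤ q.y := by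
  set s := D.filter fun r => p.y < r.y ∧ r.y ≤ q.y
  have hqs : q ∈ s := Finset.mem_filter.mpr ⟨hq, hpq, le_rfl⟩
  obtain ⟨m, hms, hmin⟩ := s.exists_min_image Ray.y ⟨q, hqs⟩
  obtain ⟨hmD, hpm, hmq⟩ := Finset.mem_filter.mp hms
  refine ⟨m, ⟨hp, hmD, hpm, fun r hr ⟨hpr, hrm⟩ => ?_⟩, hmq⟩
  exact (hmin r (Finset.mem_filter.mpr ⟨hr, hpr, hrm.le.trans hmq⟩)).not_gt hrm

lemma exists_justAbove_ge {D : Finset Ray} {p q : Ray} (hp : p ∈ D) (hq : q ∈ D)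
    (hqp : q.y < p.y) : ∃ m, justAbove D m p ∧ q.y ≤ m.y := by
  set s := D.filter fun r => q.y ≤ r.y ∧ r.y < p.y
  have hqs : q ∈ s := Finset.mem_filter.mpr ⟨hq, le_rfl, hqp⟩
  obtain ⟨m, hms, hmax⟩ := s.exists_max_image Ray.y ⟨q, hqs⟩
  obtain ⟨hmD, hqm, hmp⟩ := Finset.mem_filter.mp hms
  refine ⟨m, ⟨hmD, hp, hmp, fun r hr ⟨hmr, hrp⟩ => ?_⟩, hqm⟩
  exact (hmax r (Finset.mem_filter.mpr ⟨hr, hqm.trans hmr.le, hrp⟩)).not_gt hmr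

lemma exists_adjacent_hits {D : Finset Ray} {v : VSeg}
    (hD : ∀ a ∈ D, ∀ b ∈ D, a ≠ b → a.y ≠ b.y) {p q : Ray} (hp : p ∈ D) (hq : q ∈ D)
    (hqp : q ≠ p) (hpv : hits p v) (hqv : hits q v) (hpmin : ∀ r ∈ D, p.x ≤ r.x) :
    ∃ m, adjacent D p m ∧ hits m v := by
  rcases (hD q hq p hp hqp).lt_or_gt with hqp | hpq
  · obtain ⟨m, hm, hqm⟩ := exists_justAbove_ge hp hq hqp
    exact ⟨m, .inr hm, hits_of_between hqv hpv (hpv.1.trans (hpmin m hm.1)) hqm hm.2.2.1.le⟩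
  · obtain ⟨m, hm, hmq⟩ := exists_justAbove_le hp hq hpq
    exact ⟨m, .inl hm, hits_of_between hpv hqv (hpv.1.trans (hpmin m hm.2.1)) hm.2.2.1.le hmq⟩

namespace ModSSRTrace

variable {R : Finset Ray} {V : Finset VSeg} (t : ModSSRTrace R V) {n : ℕ}

lemma Ss_succ (hn : n < t.steps) :
    t.Ss (n + 1) = t.Ss n ∪ (t.Rs n).filter (critical (t.Rs n) (t.Vs n)) :=
  t.S_step (n + 1) n.succ_pos hn

lemma mem_Vs_succ (hn : n < t.steps) {v : VSeg} :
    v ∈ t.Vs (n + 1) ↔ v ∈ t.Vs n ∧ ∀ r ∈ t.Ss (n + 1), ¬ hits r v := by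
  rw [t.V_step (n + 1) n.succ_pos hn]
  exact Finset.mem_filter

lemma Rs_succ (hn : n < t.steps) :
    t.Rs (n + 1) = (t.Rs n \ t.Ss (n + 1)).erase (t.pivot (n + 1)) :=
  t.R_step (n + 1) n.succ_pos hn

lemma pivot_mem_sdiff (hn : n < t.steps) : t.pivot (n + 1) ∈ t.Rs n \ t.Ss (n + 1) :=
  t.pivot_mem (n + 1) n.succ_pos hn

lemma Tok_succ_of_ne_pivot (hn : n < t.steps) {r : Ray} (hr : r ≠ t.pivot (n + 1)) :
    t.Tok (n + 1) r =
      if adjacent (t.Rs n \ t.Ss (n + 1)) (t.pivot (n + 1)) r then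
        t.Tok n r ∪ (t.Tok n (t.pivot (n + 1))).filter
          (fun x => ∃ v ∈ t.Vs (n + 1), hits x v ∧ hits (t.pivot (n + 1)) v ∧ hits r v)
      else t.Tok n r := by
  rw [t.Tok_step (n + 1) n.succ_pos hn r, if_neg hr]
  exact if_congr Iff.rfl rfl rfl

lemma Tok_subset_Tok_succ (hn : n < t.steps) {r : Ray} (hr : r ≠ t.pivot (n + 1)) :
    t.Tok n r ⊆ t.Tok (n + 1) r := by
  rw [t.Tok_succ_of_ne_pivot hn hr]
  split_ifs
  exacts [Finset.subset_union_left, subset_rfl]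

lemma Vs_subset : ∀ {i}, i ≤ t.steps → t.Vs i ⊆ V
  | 0, _ => t.init_V.subset
  | _ + 1, hn =>
    fun _ hv => Vs_subset (Nat.le_of_succ_le hn) ((t.mem_Vs_succ hn).mp hv).1

lemma Rs_subset : ∀ {i}, i ≤ t.steps → t.Rs i ⊆ R
  | 0, _ => t.init_R.subset
  | n + 1, hn => by
    rw [t.Rs_succ hn]
    exact (Finset.erase_subset _ _).trans
      (Finset.sdiff_subset.trans (Rs_subset (Nat.le_of_succ_le hn)))

lemma Ss_mono {i j : ℕ} (hij : i ≤ j) (hj : j ≤ t.steps) : t.Ss i ⊆ t.Ss j := by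
  induction j, hij using Nat.le_induction with
  | base => exact subset_rfl
  | succ k _ ih =>
    rw [t.Ss_succ hj]
    exact (ih (by omega)).trans Finset.subset_union_left

lemma pivot_ne_of_mem_Ss (hn : n < t.steps) {r : Ray} (hr : r ∈ t.Ss (n + 1)) :
    r ≠ t.pivot (n + 1) :=
  fun he => (Finset.mem_sdiff.mp (t.pivot_mem_sdiff hn)).2 (he ▸ hr)

lemma Tok_subset_of_mem_Ss {i j : ℕ} (hij : i < j) (hj : j ≤ t.steps) {r : Ray}
    (hr : r ∈ t.Ss (i + 1)) : t.Tok i r ⊆ t.Tok j r := by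
  induction j, hij using Nat.le_induction with
  | base => exact t.Tok_subset_Tok_succ hj (t.pivot_ne_of_mem_Ss hj hr)
  | succ k hik ih =>
    have hrk : r ∈ t.Ss (k + 1) := t.Ss_mono (by omega : i + 1 ≤ k + 1) hj hr
    exact (ih (by omega)).trans (t.Tok_subset_Tok_succ hj (t.pivot_ne_of_mem_Ss hj hrk))

lemma exists_critical_of_mem_Ss {r : Ray} : ∀ {j}, j ≤ t.steps → r ∈ t.Ss j →
    ∃ i < j, r ∈ t.Ss (i + 1) ∧ critical (t.Rs i) (t.Vs i) r
  | 0, _, hr => by simp [t.init_S] at hr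
  | n + 1, hn, hr => by
    rcases Finset.mem_union.mp (t.Ss_succ hn ▸ hr) with hrn | hcrit
    · obtain ⟨i, hi, hri⟩ := exists_critical_of_mem_Ss (Nat.le_of_succ_le hn) hrn
      exact ⟨i, by omega, hri⟩
    · exact ⟨n, n.lt_succ_self, hr, (Finset.mem_filter.mp hcrit).2⟩

lemma notMem_Ss_of_hits (hn : n < t.steps) {v : VSeg} (hv : v ∈ t.Vs (n + 1)) {r : Ray}
    (hrv : hits r v) : r ∉ t.Ss (n + 1) :=
  fun hr => ((t.mem_Vs_succ hn).mp hv).2 r hr hrv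

/-- Otherwise the pivot would have been critical and joined the solution. -/
lemma exists_ne_pivot_hits (hn : n < t.steps) {v : VSeg} (hv : v ∈ t.Vs (n + 1))
    (hpv : hits (t.pivot (n + 1)) v) :
    ∃ q ∈ t.Rs n \ t.Ss (n + 1), q ≠ t.pivot (n + 1) ∧ hits q v := by
  obtain ⟨hpR, hpS⟩ := Finset.mem_sdiff.mp (t.pivot_mem_sdiff hn)
  by_contra! hnone
  refine hpS (t.Ss_succ hn ▸ Finset.mem_union_right _ (Finset.mem_filter.mpr ⟨hpR, hpR, v,
    ((t.mem_Vs_succ hn).mp hv).1, hpv, fun q hq hqv => ?_⟩))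
  by_contra hqp
  exact hnone q (Finset.mem_sdiff.mpr ⟨hq, t.notMem_Ss_of_hits hn hv hqv⟩) hqp hqv

lemma mem_Tok_succ_of_adjacent (hn : n < t.steps) {m x : Ray} {v : VSeg}
    (hadj : adjacent (t.Rs n \ t.Ss (n + 1)) (t.pivot (n + 1)) m)
    (hx : x ∈ t.Tok n (t.pivot (n + 1))) (hv : v ∈ t.Vs (n + 1)) (hxv : hits x v)
    (hpv : hits (t.pivot (n + 1)) v) (hmv : hits m v) : x ∈ t.Tok (n + 1) m := by
  rw [t.Tok_succ_of_ne_pivot hn hadj.ne, if_pos hadj]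
  exact Finset.mem_union_right _ (Finset.mem_filter.mpr ⟨hx, v, hv, hxv, hpv, hmv⟩)

lemma exists_mem_Tok_of_hits (hR : ∀ r ∈ R, ∀ r' ∈ R, r ≠ r' → r.y ≠ r'.y) :
    ∀ {i}, i ≤ t.steps → ∀ v ∈ t.Vs i, ∀ x ∈ R, hits x v →
      ∃ r ∈ t.Rs i, hits r v ∧ x ∈ t.Tok i r
  | 0, _, _, _, x, hx, hxv => ⟨x, by rwa [t.init_R], hxv, by simp [t.init_T]⟩
  | n + 1, hn, v, hv, x, hx, hxv => by
    have hvn : v ∈ t.Vs n := ((t.mem_Vs_succ hn).mp hv).1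
    obtain ⟨r, hr, hrv, hxr⟩ := exists_mem_Tok_of_hits hR (Nat.le_of_succ_le hn) v hvn x hx hxv
    by_cases hrp : r = t.pivot (n + 1)
    · subst hrp
      set D := t.Rs n \ t.Ss (n + 1)
      have hDR : D ⊆ R := Finset.sdiff_subset.trans (t.Rs_subset (Nat.le_of_succ_le hn))
      obtain ⟨q, hq, hqp, hqv⟩ := t.exists_ne_pivot_hits hn hv hrv
      obtain ⟨m, hadj, hmv⟩ := exists_adjacent_hits (fun a ha b hb => hR a (hDR ha) b (hDR hb))
        (t.pivot_mem_sdiff hn) hq hqp hrv hqv (t.pivot_min (n + 1) n.succ_pos hn)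
      exact ⟨m, t.Rs_succ hn ▸ Finset.mem_erase.mpr ⟨hadj.ne, hadj.mem⟩, hmv,
        t.mem_Tok_succ_of_adjacent hn hadj hxr hv hxv hrv hmv⟩
    · refine ⟨r, t.Rs_succ hn ▸ Finset.mem_erase.mpr ⟨hrp, ?_⟩, hrv,
        t.Tok_subset_Tok_succ hn hrp hxr⟩
      exact Finset.mem_sdiff.mpr ⟨hr, t.notMem_Ss_of_hits hn hv hrv⟩

end ModSSRTrace

theorem modSSR_critical_segment_general (R : Finset Ray) (V : Finset VSeg)
    (hRdisj : ∀ r ∈ R, ∀ r' ∈ R, r ≠ r' → r.y ≠ r'.y)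
    (t : ModSSRTrace R V)
    (r : Ray) (hr : r ∈ t.Ss t.steps) :
    ∃ ν ∈ V, hits r ν ∧ ∀ r'' ∈ R, hits r'' ν → r'' ∈ t.Tok t.steps r := by
  obtain ⟨i, hi, hri, -, ν, hν, hrν, hνr⟩ := t.exists_critical_of_mem_Ss le_rfl hr
  refine ⟨ν, t.Vs_subset hi.le hν, hrν, fun x hx hxν => ?_⟩
  obtain ⟨r', hr', hr'ν, hxr'⟩ := t.exists_mem_Tok_of_hits hRdisj hi.le ν hν x hx hxν
  rw [hνr r' hr' hr'ν] at hxr'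
  exact t.Tok_subset_of_mem_Ss hi le_rfl hri hxr'

/-- Observation 3: for each ray `r` of the solution output by MOD-SSR,
there is a critical segment `ν_r ∈ V` intersecting `r` such that every input ray
intersecting `ν_r` belongs to the token `T_r` at termination. -/
theorem modSSR_critical_segment (R : Finset Ray) (V : Finset VSeg)
    (hVok : ∀ v ∈ V, v.lo ≤ v.hi)
    (hRdisj : ∀ r ∈ R, ∀ r' ∈ R, r ≠ r' → r.y ≠ r'.y)
    (hVdisj : ∀ v ∈ V, ∀ w ∈ V, v ≠ w → v.x ≠ w.x)
    (hfeas : ∀ v ∈ V, ∃ r ∈ R, hits r v)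
    (t : ModSSRTrace R V)
    (r : Ray) (hr : r ∈ t.Ss t.steps) :
    ∃ ν ∈ V, hits r ν ∧ ∀ r'' ∈ R, hits r'' ν → r'' ∈ t.Tok t.steps r :=
  modSSR_critical_segment_general R V hRdisj t r hr
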